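/- arXiv:2603.27586 — 3 statements merged into one kernel-verified Lean document; each statement's English description precedes it below -/
import Mathlib

section
/- Consider the discrete-time system x_{t+1} = Ā φ(x_t) + w_t, t = 0,…,T−1, under Assumption 1 and Assumption 2. Then for every t ∈ {0,…,T−1}, the ψ2-norm of ‖φ(x_t)‖₂ is at most √n L σ / (1 − ρL), i.e. inf{k > 0 : E[exp(‖φ(x_t)‖₂²/k²)] ≤ e} ≤ √n L σ / (1 − ρL). -/
/-! If `‖x_s‖` and `‖w_s‖` have ψ2-scales `k` and `(1 - ρL) k`, then
`‖x_{s+1}‖ / k ≤ ρL · (‖x_s‖ / k) + (1 - ρL) · (‖w_s‖ / ((1 - ρL) k))`, and convexity of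
`t ↦ exp t²` turns this convex combination into `E exp(‖x_{s+1}‖² / k²) ≤ e`: the scale `k`
propagates along the trajectory. Jensen over the `n` coordinates gives `‖x_0‖` and `‖w_s‖` the scale
`√n σ` (for `w_s` after integrating the conditional bound), so every `k > √n σ / (1 - ρL)` works,
and `‖φ(x_t)‖ ≤ L ‖x_t‖` finishes the proof. -/

open MeasureTheory Real

section Psi2

variable {Ω : Type*} {mΩ : MeasurableSpace Ω} {P : Measure Ω}

/-- `‖Y‖_ψ2 ≤ k` for `k > 0`. Integrability is part of the condition because a non-integrable
function has Bochner integral `0`. -/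
def Psi2Le (P : Measure Ω) (Y : Ω → ℝ) (k : ℝ) : Prop :=
  Integrable (fun ω => exp (Y ω ^ 2 / k ^ 2)) P ∧ ∫ ω, exp (Y ω ^ 2 / k ^ 2) ∂P ≤ exp 1

noncomputable def psi2Norm (P : Measure Ω) (Y : Ω → ℝ) : ℝ :=
  sInf {k : ℝ | 0 < k ∧ ∫ ω, exp (Y ω ^ 2 / k ^ 2) ∂P ≤ exp 1}

theorem psi2Norm_const_zero [IsProbabilityMeasure P] : psi2Norm P (fun _ => 0) = 0 := by
  refine le_antisymm (le_of_forall_gt_imp_ge_of_dense fun k hk => ?_)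
    (Real.sInf_nonneg fun _ hk => hk.1.le)
  exact csInf_le ⟨0, fun _ hk => hk.1.le⟩ ⟨hk, by simp⟩

theorem psi2Norm_le_of_forall_lt {Y : Ω → ℝ} {K : ℝ} (hK : 0 ≤ K)
    (hY : ∀ k > K, Psi2Le P Y k) : psi2Norm P Y ≤ K :=
  le_of_forall_gt_imp_ge_of_dense fun k hk =>
    csInf_le ⟨0, fun _ hk => hk.1.le⟩ ⟨hK.trans_lt hk, (hY k hk).2⟩

/-- Jensen's inequality for the convex function `exp`. -/
theorem Psi2Le.of_sq_div_le_sum {ι : Type*} {s : Finset ι} {Y : ι → Ω → ℝ} {a w : ι → ℝ}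
    {Z : Ω → ℝ} {k : ℝ} (hY : ∀ i ∈ s, Psi2Le P (Y i) (a i)) (hw₀ : ∀ i ∈ s, 0 ≤ w i)
    (hw₁ : ∑ i ∈ s, w i = 1) (hZ : AEStronglyMeasurable Z P)
    (h : ∀ ω, Z ω ^ 2 / k ^ 2 ≤ ∑ i ∈ s, w i * (Y i ω ^ 2 / a i ^ 2)) : Psi2Le P Z k := by
  have hbound : ∀ ω, exp (Z ω ^ 2 / k ^ 2) ≤ ∑ i ∈ s, w i * exp (Y i ω ^ 2 / a i ^ 2) :=
    fun ω => (exp_le_exp.2 (h ω)).trans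
      (convexOn_exp.map_sum_le hw₀ hw₁ fun _ _ => Set.mem_univ _)
  have hsum : Integrable (fun ω => ∑ i ∈ s, w i * exp (Y i ω ^ 2 / a i ^ 2)) P :=
    integrable_finsetSum _ fun i hi => (hY i hi).1.const_mul _
  have hint : Integrable (fun ω => exp (Z ω ^ 2 / k ^ 2)) P :=
    hsum.mono'
      ((by fun_prop : Continuous fun y : ℝ => exp (y ^ 2 / k ^ 2)).comp_aestronglyMeasurable hZ)
      (ae_of_all _ fun ω => by rw [norm_of_nonneg (exp_pos _).le]; exact hbound ω)
  refine ⟨hint, ?_⟩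
  calc ∫ ω, exp (Z ω ^ 2 / k ^ 2) ∂P
      ≤ ∫ ω, ∑ i ∈ s, w i * exp (Y i ω ^ 2 / a i ^ 2) ∂P := integral_mono hint hsum hbound
    _ = ∑ i ∈ s, w i * ∫ ω, exp (Y i ω ^ 2 / a i ^ 2) ∂P := by
      rw [integral_finsetSum _ fun i hi => (hY i hi).1.const_mul _]
      simp_rw [integral_const_mul]
    _ ≤ ∑ i ∈ s, w i * exp 1 :=
      Finset.sum_le_sum fun i hi => mul_le_mul_of_nonneg_left (hY i hi).2 (hw₀ i hi)
    _ = exp 1 := by rw [← Finset.sum_mul, hw₁, one_mul]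

theorem Psi2Le.of_abs_div_le {X Y : Ω → ℝ} {k k' : ℝ} (hX : Psi2Le P X k)
    (hY : AEStronglyMeasurable Y P) (hk' : 0 ≤ k') (h : ∀ ω, |Y ω| / k' ≤ |X ω| / k) :
    Psi2Le P Y k' :=
  Psi2Le.of_sq_div_le_sum (s := {()}) (Y := fun _ => X) (a := fun _ => k) (w := fun _ => 1)
    (by simpa using hX) (by simp) (by simp) hY fun ω => by
      have hsq := pow_le_pow_left₀ (div_nonneg (abs_nonneg _) hk') (h ω) 2
      rw [div_pow, div_pow, sq_abs, sq_abs] at hsq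
      simpa using hsq

theorem Psi2Le.of_abs_div_le_add {U V Z : Ω → ℝ} {a c k p q : ℝ} (hU : Psi2Le P U a)
    (hV : Psi2Le P V c) (hp : 0 ≤ p) (hq : 0 ≤ q) (hpq : p + q = 1)
    (hZ : AEStronglyMeasurable Z P) (hk : 0 ≤ k)
    (h : ∀ ω, |Z ω| / k ≤ p * (|U ω| / a) + q * (|V ω| / c)) : Psi2Le P Z k := by
  refine Psi2Le.of_sq_div_le_sum (s := Finset.univ) (Y := ![U, V]) (a := ![a, c]) (w := ![p, q])
    (by simp [Fin.forall_fin_two, hU, hV]) (by simp [Fin.forall_fin_two, hp, hq])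
    (by simpa using hpq) hZ fun ω => ?_
  have hsq := (Even.convexOn_pow (𝕜 := ℝ) even_two).2 (Set.mem_univ (|U ω| / a))
    (Set.mem_univ (|V ω| / c)) hp hq hpq
  have hZsq := pow_le_pow_left₀ (div_nonneg (abs_nonneg _) hk) (h ω) 2
  simp only [smul_eq_mul, div_pow, sq_abs] at hsq hZsq
  simpa using hZsq.trans hsq

theorem psi2Norm_le_mul_of_abs_le {X Y : Ω → ℝ} {K L : ℝ} (hK : 0 ≤ K) (hL : 0 ≤ L)
    (hX : ∀ k > K, Psi2Le P X k) (hY : AEStronglyMeasurable Y P) (h : ∀ ω, |Y ω| ≤ L * |X ω|) :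
    psi2Norm P Y ≤ L * K := by
  refine psi2Norm_le_of_forall_lt (mul_nonneg hL hK) fun k' hk' => ?_
  have hk'₀ : 0 < k' := (mul_nonneg hL hK).trans_lt hk'
  -- any `k > K` with `L * k ≤ k'` will do
  set k := K + (k' - L * K) / (L + 1)
  have hKk : K < k := lt_add_of_pos_right _ (div_pos (sub_pos.2 hk') (by linarith))
  have hLk : L * k ≤ k' := by
    have : L * ((k' - L * K) / (L + 1)) ≤ k' - L * K := by
      rw [← mul_div_assoc, div_le_iff₀ (by linarith)]
      nlinarith
    linarith [mul_add L K ((k' - L * K) / (L + 1))]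
  refine (hX k hKk).of_abs_div_le hY hk'₀.le fun ω => ?_
  rw [div_le_div_iff₀ hk'₀ (hK.trans_lt hKk)]
  calc |Y ω| * k ≤ L * |X ω| * k := by gcongr; exact h ω
    _ = |X ω| * (L * k) := by ring
    _ ≤ |X ω| * k' := by gcongr

theorem psi2Le_of_abs_succ_le {X W : ℕ → Ω → ℝ} {T : ℕ} {r k : ℝ}
    (hX : ∀ s, AEStronglyMeasurable (X s) P) (hr₀ : 0 ≤ r) (hr₁ : r < 1) (hk : 0 < k)
    (hstep : ∀ s < T, ∀ ω, |X (s + 1) ω| ≤ r * |X s ω| + |W s ω|)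
    (hX₀ : Psi2Le P (X 0) k) (hW : ∀ s < T, Psi2Le P (W s) ((1 - r) * k)) :
    ∀ s ≤ T, Psi2Le P (X s) k := by
  intro s
  induction s with
  | zero => exact fun _ => hX₀
  | succ s ih =>
    intro hs
    have h1r : 0 < 1 - r := sub_pos.2 hr₁
    refine (ih (by omega)).of_abs_div_le_add (hW s hs) hr₀ h1r.le (by ring) (hX _) hk.le
      fun ω => ?_
    calc |X (s + 1) ω| / k ≤ (r * |X s ω| + |W s ω|) / k := by gcongr; exact hstep s hs ω
      _ = r * (|X s ω| / k) + (1 - r) * (|W s ω| / ((1 - r) * k)) := by field_simp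

theorem psi2Le_norm_of_forall_coord {n : ℕ} (hn : 0 < n) {v : Ω → EuclideanSpace ℝ (Fin n)}
    {σ k : ℝ} (hσ : 0 < σ) (hv : AEStronglyMeasurable v P)
    (hcoord : ∀ i, Psi2Le P (fun ω => v ω i) σ) (hk : √n * σ ≤ k) :
    Psi2Le P (fun ω => ‖v ω‖) k := by
  have hn' : (0 : ℝ) < n := Nat.cast_pos.2 hn
  have hnσ : (n : ℝ) * σ ^ 2 ≤ k ^ 2 := by
    simpa [mul_pow, sq_sqrt hn'.le] using pow_le_pow_left₀ (by positivity) hk 2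
  refine Psi2Le.of_sq_div_le_sum (s := Finset.univ) (w := fun _ => (n : ℝ)⁻¹)
    (fun i _ => hcoord i) (by simp) (by simp [hn'.ne']) hv.norm fun ω => ?_
  rw [EuclideanSpace.norm_sq_eq, Finset.sum_div]
  refine Finset.sum_le_sum fun i _ => ?_
  rw [Real.norm_eq_abs, sq_abs, inv_mul_eq_div, div_div]
  exact div_le_div_of_nonneg_left (sq_nonneg _) (by positivity) (mul_comm (n : ℝ) _ ▸ hnσ)

theorem integral_le_of_ae_condExp_le [IsProbabilityMeasure P] {m : MeasurableSpace Ω}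
    (hm : m ≤ mΩ) {f : Ω → ℝ} {C : ℝ} (h : ∀ᵐ ω ∂P, P[f|m] ω ≤ C) :
    ∫ ω, f ω ∂P ≤ C := by
  rw [← integral_condExp hm]
  calc ∫ ω, P[f|m] ω ∂P ≤ ∫ _, C ∂P := integral_mono_ae integrable_condExp (integrable_const _) h
    _ = C := by simp

end Psi2

theorem nonneg_of_forall_norm_le_mul {E F : Type*} [NormedAddGroup E] [Nontrivial E]
    [SeminormedAddGroup F] {f : E → F} {L : ℝ} (hf : ∀ y, ‖f y‖ ≤ L * ‖y‖) : 0 ≤ L := by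
  obtain ⟨y, hy⟩ := exists_ne (0 : E)
  exact nonneg_of_mul_nonneg_left ((norm_nonneg _).trans (hf y)) (norm_pos_iff.2 hy)

theorem norm_map_add_le {E F : Type*} [SeminormedAddCommGroup E] [NormedSpace ℝ E]
    [SeminormedAddCommGroup F] [NormedSpace ℝ F] (A : F →L[ℝ] E) {f : E → F} {L : ℝ}
    (hf : ∀ y, ‖f y‖ ≤ L * ‖y‖) (y z : E) : ‖A (f y) + z‖ ≤ ‖A‖ * L * ‖y‖ + ‖z‖ := by
  rw [mul_assoc]
  exact (norm_add_le _ _).trans (add_le_add_left ((A.le_opNorm _).trans (by gcongr; exact hf y)) _)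

/-- Consider the discrete-time system `x_{t+1} = Ā φ(x_t) + w_t`, `t = 0,…,T−1`, under
Assumption 1 (stability: `ρ = ‖Ā‖₂`, `φ` is `L`-Lipschitz in `ℓ2`-norm, `φ(0) = 0`, `ρL < 1`)
and Assumption 2 (sub-Gaussian disturbance: `E[exp((x₀^{(i)})²/σ²)] ≤ e` and a.s.
`E[exp((w_t^{(i)})²/σ²) | F_t] ≤ e` for all `t ≥ 0` and coordinates `i`, where
`F_t = σ(x_0,…,x_t)`). Then for every `t ∈ {0,…,T−1}`, the `ψ2`-norm of `‖φ(x_t)‖₂` is at most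
`√n L σ / (1 − ρL)`. -/
theorem stmt_9 {Ω : Type*} [MeasurableSpace Ω] (P : Measure Ω) [IsProbabilityMeasure P]
    (n m T : ℕ) (L ρ σ : ℝ) (hσ : 0 < σ)
    (φ : EuclideanSpace ℝ (Fin n) → EuclideanSpace ℝ (Fin m))
    (Abar : EuclideanSpace ℝ (Fin m) →L[ℝ] EuclideanSpace ℝ (Fin n))
    (x w : ℕ → Ω → EuclideanSpace ℝ (Fin n))
    (hxmeas : ∀ t, Measurable (x t)) (hwmeas : ∀ t, Measurable (w t))
    (hdyn : ∀ t < T, ∀ ω, x (t + 1) ω = Abar (φ (x t ω)) + w t ω)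
    -- Assumption 1 (stability)
    (hρ : ρ = ‖Abar‖) (hφL : ∀ a b, ‖φ a - φ b‖ ≤ L * ‖a - b‖) (hφ0 : φ 0 = 0)
    (hstab : ρ * L < 1)
    -- the filtration F_t = σ(x_0,…,x_t)
    (F : ℕ → MeasurableSpace Ω)
    (hF : ∀ t, F t = ⨆ s ∈ Set.Iic t, MeasurableSpace.comap (x s) inferInstance)
    -- Assumption 2 (sub-Gaussian disturbance)
    (hx0int : ∀ i, Integrable (fun ω => Real.exp ((x 0 ω i) ^ 2 / σ ^ 2)) P)
    (hx0sub : ∀ i, ∫ ω, Real.exp ((x 0 ω i) ^ 2 / σ ^ 2) ∂P ≤ Real.exp 1)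
    (hwint : ∀ t (i : Fin n), Integrable (fun ω => Real.exp ((w t ω i) ^ 2 / σ ^ 2)) P)
    (hwsub : ∀ t (i : Fin n),
      ∀ᵐ ω ∂P, (P[fun ω' => Real.exp ((w t ω' i) ^ 2 / σ ^ 2)|F t]) ω ≤ Real.exp 1) :
    ∀ t < T,
      sInf {k : ℝ | 0 < k ∧ ∫ ω, Real.exp (‖φ (x t ω)‖ ^ 2 / k ^ 2) ∂P ≤ Real.exp 1} ≤
        Real.sqrt n * L * σ / (1 - ρ * L) := by
  intro t ht
  change psi2Norm P (fun ω => ‖φ (x t ω)‖) ≤ _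
  have hφ : ∀ y, ‖φ y‖ ≤ L * ‖y‖ := fun y => by simpa [hφ0] using hφL y 0
  rcases Nat.eq_zero_or_pos n with rfl | hn
  · simp only [Subsingleton.elim (x t _) 0, hφ0, norm_zero, psi2Norm_const_zero,
      CharP.cast_eq_zero, sqrt_zero, zero_mul, zero_div, le_refl]
  have : NeZero n := ⟨hn.ne'⟩
  have hL : 0 ≤ L := nonneg_of_forall_norm_le_mul hφ
  have hr₀ : 0 ≤ ρ * L := mul_nonneg (hρ ▸ norm_nonneg _) hL
  have hr₁ : 0 < 1 - ρ * L := sub_pos.2 hstab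
  have hFle : ∀ s, F s ≤ ‹MeasurableSpace Ω› := fun s =>
    hF s ▸ iSup₂_le fun u _ => (hxmeas u).comap_le
  set K := √n * σ / (1 - ρ * L)
  have hK : √n * σ ≤ K := le_div_self (by positivity) hr₁ (by linarith)
  have hx : ∀ k > K, Psi2Le P (fun ω => ‖x t ω‖) k := fun k hk =>
    psi2Le_of_abs_succ_le (W := fun s ω => ‖w s ω‖)
      (fun s => (hxmeas s).norm.aestronglyMeasurable) hr₀ hstab
      ((by positivity : 0 ≤ K).trans_lt hk)
      (fun s hs ω => by simpa [abs_norm, hdyn s hs ω, hρ] using norm_map_add_le Abar hφ _ _)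
      (psi2Le_norm_of_forall_coord hn hσ (hxmeas 0).aestronglyMeasurable
        (fun i => ⟨hx0int i, hx0sub i⟩) (hK.trans hk.le))
      (fun s _ => psi2Le_norm_of_forall_coord hn hσ (hwmeas s).aestronglyMeasurable
        (fun i => ⟨hwint s i, integral_le_of_ae_condExp_le (hFle s) (hwsub s i)⟩)
        (by rw [← div_le_iff₀' hr₁]; exact hk.le))
      t ht.le
  have hφcont : Continuous φ :=
    (LipschitzWith.of_dist_le' fun a b => by simpa [dist_eq_norm] using hφL a b).continuous
  calc psi2Norm P (fun ω => ‖φ (x t ω)‖) ≤ L * K :=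
        psi2Norm_le_mul_of_abs_le (by positivity) hL hx
          (hφcont.measurable.comp (hxmeas t)).norm.aestronglyMeasurable
          fun ω => by simpa only [abs_norm] using hφ (x t ω)
    _ = √n * L * σ / (1 - ρ * L) := by ring
end

section
/- Let μ, T, κ > 0, let f, h : ℝᵐ → ℝ, and let ā, â ∈ ℝᵐ. Suppose that (i) 0 ≤ μ f(a) − h(a) ≤ μ² T / 2 for every a ∈ ℝᵐ, (ii) h(â) ≤ h(ā), and (iii) f(a) − f(ā) ≥ κ ‖a − ā‖₂ for every a ∈ ℝᵐ. Then ‖â − ā‖₂ ≤ μ T / (2κ). -/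
/-- Deterministic comparison lemma: let `μ, T, κ > 0`, `f, h : ℝᵐ → ℝ`, `ā, â ∈ ℝᵐ`. If
(i) `0 ≤ μ f(a) − h(a) ≤ μ² T / 2` for all `a`, (ii) `h(â) ≤ h(ā)`, and
(iii) `f(a) − f(ā) ≥ κ ‖a − ā‖₂` for all `a`, then `‖â − ā‖₂ ≤ μ T / (2κ)`. -/
theorem stmt_15 (m : ℕ) (μ T κ : ℝ) (hμ : 0 < μ) (hT : 0 < T) (hκ : 0 < κ)
    (f h : EuclideanSpace ℝ (Fin m) → ℝ) (abar ahat : EuclideanSpace ℝ (Fin m))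
    (h1 : ∀ a, 0 ≤ μ * f a - h a ∧ μ * f a - h a ≤ μ ^ 2 * T / 2)
    (h2 : h ahat ≤ h abar)
    (h3 : ∀ a, f a - f abar ≥ κ * ‖a - abar‖) :
    ‖ahat - abar‖ ≤ μ * T / (2 * κ) := by
  have ha := h1 ahat
  have hb := h1 abar
  have hc := h3 ahat
  rw [le_div_iff₀ (by positivity)]
  nlinarith [ha.1, ha.2, hb.1, hb.2, hc, mul_pos hμ hκ]
end

section
/- Fix μ > 0 and let H_μ'(z) = max(−μ, min(μ, z)). For every ε ∈ ℝᵐ, every finite family of vectors φ_0,…,φ_{T−1} ∈ ℝᵐ, and every family of reals w_0,…,w_{T−1}, one has Σ_{t=0}^{T−1} ( H_μ'(εᵀφ_t + w_t) − H_μ'(w_t) ) · (εᵀφ_t) ≥ Σ_{t ∈ G} (εᵀφ_t)², where G = { t ∈ {0,…,T−1} : |w_t| ≤ μ/2 and |εᵀφ_t| ≤ μ/2 }. -/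
open scoped RealInnerProductSpace

lemma huber_mono (μ x y : ℝ) (h : x ≤ y) :
    max (-μ) (min μ x) ≤ max (-μ) (min μ y) :=
  max_le_max le_rfl (min_le_min le_rfl h)

lemma huber_term_nonneg (μ a b : ℝ) :
    0 ≤ (max (-μ) (min μ (a + b)) - max (-μ) (min μ b)) * a := by
  rcases le_total a 0 with ha | ha
  · have := huber_mono μ (a + b) b (by linarith)
    nlinarith
  · have := huber_mono μ b (a + b) (by linarith)
    nlinarith

lemma huber_term_eq (μ a b : ℝ) (hμ : 0 < μ) (hb : |b| ≤ μ / 2) (ha : |a| ≤ μ / 2) :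
    (max (-μ) (min μ (a + b)) - max (-μ) (min μ b)) * a = a ^ 2 := by
  rw [abs_le] at ha hb
  have h1 : max (-μ) (min μ (a + b)) = a + b := by
    rw [min_eq_right (by linarith), max_eq_right (by linarith)]
  have h2 : max (-μ) (min μ b) = b := by
    rw [min_eq_right (by linarith), max_eq_right (by linarith)]
  rw [h1, h2]; ring

/-- Fix `μ > 0` and let `H_μ'(z) = max(−μ, min(μ, z))`. For every `ε ∈ ℝᵐ`, vectors
`φ_0,…,φ_{T−1} ∈ ℝᵐ` and reals `w_0,…,w_{T−1}`,
`Σ_t (H_μ'(εᵀφ_t + w_t) − H_μ'(w_t)) (εᵀφ_t) ≥ Σ_{t ∈ G} (εᵀφ_t)²`, where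
`G = { t : |w_t| ≤ μ/2 and |εᵀφ_t| ≤ μ/2 }`. -/
theorem stmt_16 (μ : ℝ) (hμ : 0 < μ) (m T : ℕ) (ε : EuclideanSpace ℝ (Fin m))
    (φ : Fin T → EuclideanSpace ℝ (Fin m)) (w : Fin T → ℝ) :
    ∑ t, (max (-μ) (min μ (⟪ε, φ t⟫ + w t)) - max (-μ) (min μ (w t))) * ⟪ε, φ t⟫ ≥
      ∑ t ∈ Finset.filter (fun t => |w t| ≤ μ / 2 ∧ |⟪ε, φ t⟫| ≤ μ / 2) Finset.univ,
        ⟪ε, φ t⟫ ^ 2 := by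
  calc ∑ t ∈ Finset.filter (fun t => |w t| ≤ μ / 2 ∧ |⟪ε, φ t⟫| ≤ μ / 2) Finset.univ,
        ⟪ε, φ t⟫ ^ 2
      = ∑ t ∈ Finset.filter (fun t => |w t| ≤ μ / 2 ∧ |⟪ε, φ t⟫| ≤ μ / 2) Finset.univ,
        (max (-μ) (min μ (⟪ε, φ t⟫ + w t)) - max (-μ) (min μ (w t))) * ⟪ε, φ t⟫ := by
        refine Finset.sum_congr rfl fun t ht => ?_
        simp only [Finset.mem_filter] at ht
        exact (huber_term_eq μ _ _ hμ ht.2.1 ht.2.2).symm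
    _ ≤ ∑ t, (max (-μ) (min μ (⟪ε, φ t⟫ + w t)) - max (-μ) (min μ (w t))) * ⟪ε, φ t⟫ :=
        Finset.sum_le_sum_of_subset_of_nonneg (Finset.filter_subset _ _)
          (fun t _ _ => huber_term_nonneg μ _ _)
end
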